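/- Let G be a connected graph with maximum degree 3 and n vertices, and let G' be the graph from the APX-reduction (as in Theorem 8 of the paper). If V_c is a vertex cover of G of size k, then {v_i^1, v_i^2 : v_i ∈ V_c} ∪ {w_i, y_i : i ∈ [n]} is a semipaired dominating set of G' of size 2k + 2n. -/

import Mathlib

open SimpleGraph Finset

/-- `D` is a dominating set of `G`. -/
def Dominating {V : Type*} (G : SimpleGraph V) (D : Finset V) : Prop :=
  ∀ v : V, ∃ u ∈ D, u = v ∨ G.Adj u v

/-- `D` is a semipaired dominating set of `G`: a dominating set whose vertices can be
partitioned into pairs (via a fixed-point-free involution) at distance at most 2. -/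
def SemiPairedDom {V : Type*} (G : SimpleGraph V) (D : Finset V) : Prop :=
  Dominating G D ∧ ∃ f : V → V,
    (∀ u ∈ D, f u ∈ D) ∧ (∀ u ∈ D, f (f u) = u) ∧ (∀ u ∈ D, f u ≠ u) ∧
    (∀ u ∈ D, G.Adj u (f u) ∨ ∃ w, G.Adj u w ∧ G.Adj w (f u))

/-- `D` is a paired dominating set of `G`: a dominating set whose induced subgraph has a
perfect matching (encoded by a fixed-point-free involution pairing adjacent vertices). -/
def PairedDom {V : Type*} (G : SimpleGraph V) (D : Finset V) : Prop :=
  Dominating G D ∧ ∃ f : V → V,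
    (∀ u ∈ D, f u ∈ D) ∧ (∀ u ∈ D, f (f u) = u) ∧ (∀ u ∈ D, f u ≠ u) ∧
    (∀ u ∈ D, G.Adj u (f u))

/-- The domination number. -/
noncomputable def domNum (V : Type*) [Fintype V] (G : SimpleGraph V) : ℕ :=
  sInf {k : ℕ | ∃ D : Finset V, Dominating G D ∧ D.card = k}

/-- The semipaired domination number. -/
noncomputable def semiPairedDomNum (V : Type*) [Fintype V] (G : SimpleGraph V) : ℕ :=
  sInf {k : ℕ | ∃ D : Finset V, SemiPairedDom G D ∧ D.card = k}

/-- The paired domination number. -/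
noncomputable def pairedDomNum (V : Type*) [Fintype V] (G : SimpleGraph V) : ℕ :=
  sInf {k : ℕ | ∃ D : Finset V, PairedDom G D ∧ D.card = k}

/-- A vertex cover of `G`. -/
def IsVertexCover {α : Type*} (G : SimpleGraph α) (C : Finset α) : Prop :=
  ∀ u v : α, G.Adj u v → u ∈ C ∨ v ∈ C

/-- The graph `G'` of the APX-reduction: two copies of the incidence structure of `G`
(vertices `Sum.inl (Sum.inl (i, l))` are `v_i^{l+1}` and `Sum.inl (Sum.inr (e, l))` are
`e^{l+1}`), together with gadget paths `w_i – x_i – y_i – z_i`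
(the vertices `Sum.inr (i, 0), …, Sum.inr (i, 3)`) attached via `w_i` to both
`v_i^1` and `v_i^2`. -/
def apxG {α : Type*} (G : SimpleGraph α) :
    SimpleGraph ((α × Fin 2 ⊕ ↥G.edgeSet × Fin 2) ⊕ α × Fin 4) :=
  SimpleGraph.fromRel (fun u v =>
    (∃ (i : α) (l : Fin 2) (e : G.edgeSet), u = Sum.inl (Sum.inl (i, l)) ∧
      v = Sum.inl (Sum.inr (e, l)) ∧ i ∈ (e : Sym2 α)) ∨
    (∃ (i : α) (l : Fin 2), u = Sum.inl (Sum.inl (i, l)) ∧ v = Sum.inr (i, 0)) ∨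
    (∃ (i : α) (j k : Fin 4), u = Sum.inr (i, j) ∧ v = Sum.inr (i, k) ∧
      (k : ℕ) = (j : ℕ) + 1))


/-! Every edge vertex `e^l` is dominated by the copy `v_i^l` of an endpoint `v_i ∈ C` of `e`,
and every gadget path `w_i x_i y_i z_i` by `w_i` and `y_i`. The set is partitioned into the
pairs `{v_i^1, v_i^2}`, joined through `w_i`, and `{w_i, y_i}`, joined through `x_i`. -/

theorem SemiPairedDom.of_involutive {V : Type*} {G : SimpleGraph V} {D : Finset V}
    (hD : Dominating G D) {f : V → V} (hf : Function.Involutive f)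
    (hmaps : ∀ u ∈ D, f u ∈ D) (hne : ∀ u ∈ D, f u ≠ u)
    (hcommon : ∀ u ∈ D, ∃ w, G.Adj u w ∧ G.Adj w (f u)) :
    SemiPairedDom G D :=
  ⟨hD, f, hmaps, fun u _ => hf u, hne, fun u hu => Or.inr (hcommon u hu)⟩

namespace apxG

variable {α : Type*} (G : SimpleGraph α)

theorem adj_vertex_gadget (i : α) (l : Fin 2) :
    (apxG G).Adj (Sum.inl (Sum.inl (i, l))) (Sum.inr (i, 0)) := by
  rw [apxG, fromRel_adj]
  exact ⟨by simp, Or.inl (Or.inr (Or.inl ⟨i, l, rfl, rfl⟩))⟩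

theorem adj_vertex_edge {i : α} (l : Fin 2) {e : G.edgeSet} (h : i ∈ (e : Sym2 α)) :
    (apxG G).Adj (Sum.inl (Sum.inl (i, l))) (Sum.inl (Sum.inr (e, l))) := by
  rw [apxG, fromRel_adj]
  exact ⟨by simp, Or.inl (Or.inl ⟨i, l, e, rfl, rfl, h⟩)⟩

theorem adj_gadget_succ (i : α) {j k : Fin 4} (h : (k : ℕ) = j + 1) :
    (apxG G).Adj (Sum.inr (i, j)) (Sum.inr (i, k)) := by
  rw [apxG, fromRel_adj]
  refine ⟨?_, Or.inl (Or.inr (Or.inr ⟨i, j, k, rfl, rfl, h⟩))⟩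
  simp only [ne_eq, Sum.inr.injEq, Prod.mk.injEq, true_and]
  omega

abbrev Vert : Type _ := (α × Fin 2 ⊕ ↥G.edgeSet × Fin 2) ⊕ α × Fin 4

def partner : Vert G → Vert G
  | Sum.inl (Sum.inl (i, l)) => Sum.inl (Sum.inl (i, l + 1))
  | Sum.inl (Sum.inr p) => Sum.inl (Sum.inr p)
  | Sum.inr (i, j) => Sum.inr (i, j + 2)

theorem partner_involutive : Function.Involutive (partner G) := by
  rintro ((⟨i, l⟩ | p) | ⟨i, j⟩)
  · fin_cases l <;> rfl
  · rfl
  · fin_cases j <;> rfl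

variable [DecidableEq α]

/-- The set `{v_i^1, v_i^2 : v_i ∈ C} ∪ {w_i, y_i : i ∈ [n]}`. -/
def coverSet [Fintype α] (C : Finset α) : Finset (Vert G) :=
  (C.image fun i => Sum.inl (Sum.inl (i, 0))) ∪ (C.image fun i => Sum.inl (Sum.inl (i, 1))) ∪
    (univ.image fun i => Sum.inr (i, 0)) ∪ (univ.image fun i => Sum.inr (i, 2))

variable {G} [Fintype α] {C : Finset α}

@[simp]
theorem vertex_mem_coverSet {i : α} {l : Fin 2} :
    Sum.inl (Sum.inl (i, l)) ∈ coverSet G C ↔ i ∈ C := by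
  fin_cases l <;> simp [coverSet]

@[simp]
theorem edge_not_mem_coverSet {p : G.edgeSet × Fin 2} :
    Sum.inl (Sum.inr p) ∉ coverSet G C := by
  simp [coverSet]

@[simp]
theorem gadget_mem_coverSet {i : α} {j : Fin 4} :
    Sum.inr (i, j) ∈ coverSet G C ↔ j = 0 ∨ j = 2 := by
  simp [coverSet, eq_comm]

theorem dominating_coverSet (hC : _root_.IsVertexCover G C) :
    Dominating (apxG G) (coverSet G C) := by
  rintro ((⟨i, l⟩ | ⟨⟨e, he⟩, l⟩) | ⟨i, j⟩)
  · exact ⟨Sum.inr (i, 0), by simp, Or.inr (adj_vertex_gadget G i l).symm⟩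
  · induction e using Sym2.ind with
    | _ a b =>
      rcases hC a b (G.mem_edgeSet.mp he) with h | h <;>
        exact ⟨_, vertex_mem_coverSet.mpr h,
          Or.inr (adj_vertex_edge G l (e := ⟨_, he⟩) (by simp))⟩
  · fin_cases j
    · exact ⟨Sum.inr (i, 0), by simp, Or.inl rfl⟩
    · exact ⟨Sum.inr (i, 0), by simp, Or.inr (adj_gadget_succ G i rfl)⟩
    · exact ⟨Sum.inr (i, 2), by simp, Or.inl rfl⟩
    · exact ⟨Sum.inr (i, 2), by simp, Or.inr (adj_gadget_succ G i rfl)⟩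

theorem partner_mem_coverSet {u} (hu : u ∈ coverSet G C) : partner G u ∈ coverSet G C := by
  rcases u with ((⟨i, l⟩ | p) | ⟨i, j⟩)
  · simpa [partner] using hu
  · simp at hu
  · simp only [gadget_mem_coverSet, partner] at hu ⊢
    rcases hu with rfl | rfl <;> decide

theorem partner_ne_of_mem_coverSet {u} (hu : u ∈ coverSet G C) : partner G u ≠ u := by
  rcases u with ((⟨i, l⟩ | p) | ⟨i, j⟩)
  · fin_cases l <;> simp [partner]
  · simp at hu
  · fin_cases j <;> simp [partner]

theorem exists_adj_adj_partner {u} (hu : u ∈ coverSet G C) :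
    ∃ w, (apxG G).Adj u w ∧ (apxG G).Adj w (partner G u) := by
  rcases u with ((⟨i, l⟩ | p) | ⟨i, j⟩)
  · exact ⟨Sum.inr (i, 0), adj_vertex_gadget G i l, (adj_vertex_gadget G i _).symm⟩
  · simp at hu
  · rcases gadget_mem_coverSet.mp hu with rfl | rfl
    · exact ⟨Sum.inr (i, 1), adj_gadget_succ G i rfl, adj_gadget_succ G i rfl⟩
    · exact ⟨Sum.inr (i, 1), (adj_gadget_succ G i rfl).symm, (adj_gadget_succ G i rfl).symm⟩

theorem semiPairedDom_coverSet (hC : _root_.IsVertexCover G C) :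
    SemiPairedDom (apxG G) (coverSet G C) :=
  .of_involutive (dominating_coverSet hC) (partner_involutive G) (fun _ => partner_mem_coverSet)
    (fun _ => partner_ne_of_mem_coverSet) (fun _ => exists_adj_adj_partner)

theorem card_coverSet : (coverSet G C).card = 2 * C.card + 2 * Fintype.card α := by
  rw [coverSet, card_union_of_disjoint, card_union_of_disjoint, card_union_of_disjoint,
    card_image_of_injective _ (fun a b h => by simpa using h),
    card_image_of_injective _ (fun a b h => by simpa using h),
    card_image_of_injective _ (fun a b h => by simpa using h),
    card_image_of_injective _ (fun a b h => by simpa using h), card_univ]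
  · ring
  all_goals simp [Finset.disjoint_left]

end apxG

theorem apxG_semiPairedDom_of_vertexCover_general {α : Type*} [Fintype α] [DecidableEq α]
    (G : SimpleGraph α)
    (C : Finset α) (hC : _root_.IsVertexCover G C) :
    SemiPairedDom (apxG G)
      ((C.image fun i => (Sum.inl (Sum.inl (i, 0)) :
          (α × Fin 2 ⊕ ↥G.edgeSet × Fin 2) ⊕ α × Fin 4)) ∪
        (C.image fun i => (Sum.inl (Sum.inl (i, 1)) :
          (α × Fin 2 ⊕ ↥G.edgeSet × Fin 2) ⊕ α × Fin 4)) ∪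
        (Finset.univ.image fun i : α => (Sum.inr (i, 0) :
          (α × Fin 2 ⊕ ↥G.edgeSet × Fin 2) ⊕ α × Fin 4)) ∪
        (Finset.univ.image fun i : α => (Sum.inr (i, 2) :
          (α × Fin 2 ⊕ ↥G.edgeSet × Fin 2) ⊕ α × Fin 4))) ∧
    ((C.image fun i => (Sum.inl (Sum.inl (i, 0)) :
          (α × Fin 2 ⊕ ↥G.edgeSet × Fin 2) ⊕ α × Fin 4)) ∪
        (C.image fun i => (Sum.inl (Sum.inl (i, 1)) :
          (α × Fin 2 ⊕ ↥G.edgeSet × Fin 2) ⊕ α × Fin 4)) ∪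
        (Finset.univ.image fun i : α => (Sum.inr (i, 0) :
          (α × Fin 2 ⊕ ↥G.edgeSet × Fin 2) ⊕ α × Fin 4)) ∪
        (Finset.univ.image fun i : α => (Sum.inr (i, 2) :
          (α × Fin 2 ⊕ ↥G.edgeSet × Fin 2) ⊕ α × Fin 4))).card
      = 2 * C.card + 2 * Fintype.card α :=
  ⟨apxG.semiPairedDom_coverSet hC, apxG.card_coverSet⟩

/-- If `C` is a vertex cover of a connected graph `G` with maximum degree
`3` and `n` vertices, then `{v_i^1, v_i^2 : v_i ∈ C} ∪ {w_i, y_i : i ∈ [n]}` is a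
semipaired dominating set of the APX-reduction graph `G'` of size `2|C| + 2n`. -/
theorem apxG_semiPairedDom_of_vertexCover {α : Type*} [Fintype α] [DecidableEq α]
    (G : SimpleGraph α) [DecidableRel G.Adj]
    (hconn : G.Connected) (hdeg : ∀ v : α, G.degree v ≤ 3)
    (C : Finset α) (hC : _root_.IsVertexCover G C) :
    SemiPairedDom (apxG G)
      ((C.image fun i => (Sum.inl (Sum.inl (i, 0)) :
          (α × Fin 2 ⊕ ↥G.edgeSet × Fin 2) ⊕ α × Fin 4)) ∪
        (C.image fun i => (Sum.inl (Sum.inl (i, 1)) :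
          (α × Fin 2 ⊕ ↥G.edgeSet × Fin 2) ⊕ α × Fin 4)) ∪
        (Finset.univ.image fun i : α => (Sum.inr (i, 0) :
          (α × Fin 2 ⊕ ↥G.edgeSet × Fin 2) ⊕ α × Fin 4)) ∪
        (Finset.univ.image fun i : α => (Sum.inr (i, 2) :
          (α × Fin 2 ⊕ ↥G.edgeSet × Fin 2) ⊕ α × Fin 4))) ∧
    ((C.image fun i => (Sum.inl (Sum.inl (i, 0)) :
          (α × Fin 2 ⊕ ↥G.edgeSet × Fin 2) ⊕ α × Fin 4)) ∪
        (C.image fun i => (Sum.inl (Sum.inl (i, 1)) :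
          (α × Fin 2 ⊕ ↥G.edgeSet × Fin 2) ⊕ α × Fin 4)) ∪
        (Finset.univ.image fun i : α => (Sum.inr (i, 0) :
          (α × Fin 2 ⊕ ↥G.edgeSet × Fin 2) ⊕ α × Fin 4)) ∪
        (Finset.univ.image fun i : α => (Sum.inr (i, 2) :
          (α × Fin 2 ⊕ ↥G.edgeSet × Fin 2) ⊕ α × Fin 4))).card
      = 2 * C.card + 2 * Fintype.card α :=
  apxG_semiPairedDom_of_vertexCover_general G C hC
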